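/- arXiv:1912.04550 — 4 statements merged into one kernel-verified Lean document; each statement's English description precedes it below -/
import Mathlib

section
/- Let G be a finite non-abelian group, K ≤ G a non-abelian subgroup, and H ≤ K an abelian subgroup. Then d(K,G) < d(H,G). -/
/-- The relative commutativity degree `d(H,G)` of a subgroup `H` of a group `G`. -/
noncomputable def relCommDeg {G : Type*} [Group G] (H : Subgroup G) : ℚ :=
  (Nat.card {p : H × G // (p.1 : G) * p.2 = p.2 * (p.1 : G)} : ℚ) /
    ((Nat.card H : ℚ) * (Nat.card G : ℚ))

/-- The set `D(G)` of all relative commutativity degrees of `G`. -/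
noncomputable def commDegSet (G : Type*) [Group G] : Set ℚ :=
  {q | ∃ H : Subgroup G, relCommDeg H = q}

/-!
Counting commuting pairs `(x, g)` fibrewise over `g` gives
`d(L,G) = (1/|G|) ∑_g 1/[L : C_L(g)]`. Each summand can only grow when `L` shrinks, and it grows
strictly at any `g` that centralizes `H` but not `K`. Such a `g` exists: if `C_G(K) = C_G(H)`,
then `H ≤ C_G(H) = C_G(K)` since `H` is abelian, hence `K ≤ C_G(H) = C_G(K)` and `K` is abelian.
-/

open Subgroup

namespace Subgroup

variable {G : Type*} [Group G]

theorem card_commutingPairs_eq_sum_card_centralizer [Fintype G] (L : Subgroup G) :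
    Nat.card {p : L × G // (p.1 : G) * p.2 = p.2 * (p.1 : G)} =
      ∑ g : G, Nat.card ((centralizer {g}).subgroupOf L) := by
  let e : {p : L × G // (p.1 : G) * p.2 = p.2 * (p.1 : G)} ≃
      Σ g : G, (centralizer {g}).subgroupOf L :=
    ((Equiv.prodComm L G).subtypeEquiv fun _ => Iff.rfl).trans <|
      (Equiv.subtypeProdEquivSigmaSubtype fun g (x : L) => (x : G) * g = g * x).trans <|
        Equiv.sigmaCongrRight fun g => Equiv.subtypeEquivRight fun x => by
          rw [mem_subgroupOf, mem_centralizer_singleton_iff]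
  rw [Nat.card_congr e, Nat.card_sigma]

theorem le_centralizer_singleton_iff {H : Subgroup G} {g : G} :
    H ≤ centralizer {g} ↔ g ∈ centralizer H :=
  ⟨fun h _ hx => mem_centralizer_singleton_iff.mp (h hx),
    fun h x hx => mem_centralizer_singleton_iff.mpr (h x hx)⟩

theorem centralizer_lt_centralizer_of_le {H K : Subgroup G} (hHK : H ≤ K)
    (hH : H ≤ centralizer H) (hK : ¬ K ≤ centralizer K) :
    centralizer (K : Set G) < centralizer H := by
  refine (centralizer_le hHK).lt_of_ne fun h => hK ?_
  rwa [h, ← le_centralizer_iff, h]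

end Subgroup

theorem relCommDeg_eq_sum_inv_relIndex {G : Type*} [Group G] [Fintype G] (L : Subgroup G) :
    relCommDeg L = (∑ g : G, ((centralizer {g}).relIndex L : ℚ)⁻¹) / Nat.card G := by
  have hL : (Nat.card L : ℚ) ≠ 0 := by exact_mod_cast Nat.card_pos.ne'
  have hcard (g : G) : (Nat.card ((centralizer {g}).subgroupOf L) : ℚ) =
      Nat.card L * ((centralizer {g}).relIndex L : ℚ)⁻¹ := by
    have h := card_mul_index ((centralizer {g}).subgroupOf L)
    have hi : ((centralizer {g}).relIndex L : ℚ) ≠ 0 := by exact_mod_cast index_ne_zero_of_finite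
    rw [eq_mul_inv_iff_mul_eq₀ hi, relIndex, ← Nat.cast_mul, h]
  rw [relCommDeg, card_commutingPairs_eq_sum_card_centralizer, Nat.cast_sum]
  simp_rw [hcard, ← Finset.mul_sum]
  field_simp

theorem relCommDeg_lt_of_centralizer_lt {G : Type*} [Group G] [Finite G] {H K : Subgroup G}
    (hHK : H ≤ K) (hC : centralizer (K : Set G) < centralizer H) :
    relCommDeg K < relCommDeg H := by
  have := Fintype.ofFinite G
  obtain ⟨g, hgH, hgK⟩ := SetLike.exists_of_lt hC
  have hpos (x : G) (L : Subgroup G) : (0 : ℚ) < (centralizer {x}).relIndex L :=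
    Nat.cast_pos.mpr index_ne_zero_of_finite.bot_lt
  have hle (x : G) : (centralizer {x}).relIndex H ≤ (centralizer {x}).relIndex K :=
    relIndex_le_of_le_right hHK index_ne_zero_of_finite
  have hH : (centralizer {g}).relIndex H = 1 :=
    relIndex_eq_one.mpr (le_centralizer_singleton_iff.mpr hgH)
  have hK : (centralizer {g}).relIndex K ≠ 1 :=
    mt relIndex_eq_one.mp (mt le_centralizer_singleton_iff.mp hgK)
  have hlt : (centralizer {g}).relIndex H < (centralizer {g}).relIndex K :=
    hH ▸ Nat.one_lt_iff_ne_zero_and_ne_one.mpr ⟨index_ne_zero_of_finite, hK⟩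
  rw [relCommDeg_eq_sum_inv_relIndex, relCommDeg_eq_sum_inv_relIndex]
  refine div_lt_div_of_pos_right (Finset.sum_lt_sum (fun x _ => ?_) ⟨g, Finset.mem_univ g, ?_⟩)
    (Nat.cast_pos.mpr Nat.card_pos)
  · exact inv_anti₀ (hpos x H) (Nat.cast_le.mpr (hle x))
  · exact inv_strictAnti₀ (hpos g H) (Nat.cast_lt.mpr hlt)

theorem relCommDeg_lt_of_nonabelian_abelian_general (G : Type*) [Group G] [Finite G]
    (H K : Subgroup G) (hHK : H ≤ K)
    (hK : ¬ ∀ a b : K, a * b = b * a) (hH : ∀ a b : H, a * b = b * a) :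
    relCommDeg K < relCommDeg H := by
  have hHcomm : H ≤ centralizer H := fun x hx y hy => congrArg Subtype.val (hH ⟨y, hy⟩ ⟨x, hx⟩)
  have hKcomm : ¬ K ≤ centralizer K := fun h => hK fun a b => Subtype.ext (h b.2 a a.2)
  exact relCommDeg_lt_of_centralizer_lt hHK (centralizer_lt_centralizer_of_le hHK hHcomm hKcomm)

theorem relCommDeg_lt_of_nonabelian_abelian (G : Type*) [Group G] [Finite G]
    (hG : ¬ ∀ a b : G, a * b = b * a) (H K : Subgroup G) (hHK : H ≤ K)
    (hK : ¬ ∀ a b : K, a * b = b * a) (hH : ∀ a b : H, a * b = b * a) :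
    relCommDeg K < relCommDeg H :=
  relCommDeg_lt_of_nonabelian_abelian_general G H K hHK hK hH
end

section
/- Let G be a finite group and x ∈ G with C_G(x) non-abelian. If H is an abelian subgroup of G with ⟨x⟩ ⊊ H ⊊ C_G(x) and H ⊄ Z(C_G(x)), then d(C_G(x),G) < d(H,G) < d(⟨x⟩,G). -/
open MulAction

section Aux

lemma my_card_sigma {ι : Type*} [Fintype ι] (f : ι → Type*) [∀ i, Finite (f i)] :
    Nat.card (Σ i, f i) = ∑ i, Nat.card (f i) := by
  classical
  have : ∀ i, Fintype (f i) := fun i => Fintype.ofFinite _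
  simp [Nat.card_eq_fintype_card, Fintype.card_sigma]

variable {G : Type*} [Group G]

/-- The copy of a subgroup inside `ConjAct G`. -/
noncomputable def conjSub (H : Subgroup G) : Subgroup (ConjAct G) :=
  H.comap (ConjAct.ofConjAct : ConjAct G ≃* G).toMonoidHom

lemma card_conjSub (H : Subgroup G) : Nat.card (conjSub H) = Nat.card H :=
  Nat.card_congr ⟨fun h => ⟨ConjAct.ofConjAct h.1, h.2⟩,
    fun h => ⟨ConjAct.toConjAct h.1, h.2⟩,
    fun _ => rfl, fun _ => rfl⟩

lemma orbit_conjSub_mono {K H : Subgroup G} (hKH : K ≤ H) (g : G) :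
    orbit (conjSub K) g ⊆ orbit (conjSub H) g := by
  rintro _ ⟨⟨k, hk⟩, rfl⟩
  exact ⟨⟨k, hKH hk⟩, rfl⟩

lemma mem_orbit_conjSub {H : Subgroup G} {h g : G} (hh : h ∈ H) :
    h * g * h⁻¹ ∈ orbit (conjSub H) g :=
  ⟨⟨ConjAct.toConjAct h, hh⟩, by
    show ConjAct.toConjAct h • g = _
    rw [ConjAct.smul_def]; simp⟩

lemma mem_orbit_conjSub_iff {H : Subgroup G} {g y : G} :
    y ∈ orbit (conjSub H) g ↔ ∃ h ∈ H, h * g * h⁻¹ = y := by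
  constructor
  · rintro ⟨⟨k, hk⟩, rfl⟩
    refine ⟨ConjAct.ofConjAct k, hk, ?_⟩
    show _ = (⟨k, hk⟩ : conjSub H) • g
    rw [Subgroup.mk_smul, ConjAct.smul_def]
  · rintro ⟨h, hh, rfl⟩
    exact mem_orbit_conjSub hh

variable [Finite G]

lemma orbit_card_pos [Fintype G] (H : Subgroup G) (g : G) :
    0 < Nat.card (orbit (conjSub H) g) :=
  Nat.card_pos_iff.2 ⟨⟨⟨g, mem_orbit_self g⟩⟩, Set.Finite.to_subtype (Set.toFinite _)⟩

lemma relCommDeg_eq [Fintype G] (H : Subgroup G) :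
    relCommDeg H = (∑ g : G, ((Nat.card (orbit (conjSub H) g) : ℚ))⁻¹) / (Nat.card G) := by
  classical
  have hcard : Nat.card {p : H × G // (p.1 : G) * p.2 = p.2 * (p.1 : G)}
      = ∑ g : G, Nat.card (stabilizer (conjSub H) g) := by
    rw [← my_card_sigma]
    refine Nat.card_congr ?_
    refine Equiv.trans
      (⟨fun p => ⟨(p.1.2, p.1.1), p.2⟩, fun p => ⟨(p.1.2, p.1.1), p.2⟩,
        fun _ => rfl, fun _ => rfl⟩ :
        {p : H × G // (p.1 : G) * p.2 = p.2 * (p.1 : G)} ≃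
        {q : G × H // (q.2 : G) * q.1 = q.1 * (q.2 : G)}) ?_
    refine Equiv.trans (Equiv.subtypeProdEquivSigmaSubtype
      (fun (g : G) (h : H) => (h : G) * g = g * (h : G))) ?_
    refine Equiv.sigmaCongrRight (fun g => ?_)
    refine ⟨fun h => ⟨⟨ConjAct.toConjAct (h.1 : G), h.1.2⟩, ?_⟩,
      fun k => ⟨⟨ConjAct.ofConjAct k.1.1, k.1.2⟩, ?_⟩, fun _ => rfl, fun _ => rfl⟩
    · have hc := h.2
      simp only [mem_stabilizer_iff]
      show ConjAct.toConjAct (h.1 : G) • g = g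
      rw [ConjAct.smul_def]
      simp only [ConjAct.ofConjAct_toConjAct]
      rw [hc]; group
    · have hc : k.1.1 • g = g := k.2
      rw [ConjAct.smul_def] at hc
      have := congrArg (· * ConjAct.ofConjAct k.1.1) hc
      simpa [mul_assoc] using this
  have horbpos : ∀ g : G, 0 < (Nat.card (orbit (conjSub H) g) : ℚ) := by
    intro g; exact_mod_cast orbit_card_pos H g
  have hHpos : 0 < (Nat.card H : ℚ) := by
    have : 0 < Nat.card H := Nat.card_pos
    exact_mod_cast this
  have hGpos : 0 < (Nat.card G : ℚ) := by
    have : 0 < Nat.card G := Nat.card_pos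
    exact_mod_cast this
  have hstab : ∀ g : G, (Nat.card (stabilizer (conjSub H) g) : ℚ)
      = (Nat.card H : ℚ) * ((Nat.card (orbit (conjSub H) g) : ℚ))⁻¹ := by
    intro g
    have h := Nat.card_congr (orbitProdStabilizerEquivGroup (conjSub H) g)
    rw [Nat.card_prod, card_conjSub] at h
    have hg := (horbpos g).ne'
    rw [eq_comm, mul_comm, inv_mul_eq_iff_eq_mul₀ hg]
    exact_mod_cast h.symm
  rw [relCommDeg, hcard]
  push_cast
  rw [Finset.sum_congr rfl (fun g _ => hstab g), ← Finset.mul_sum]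
  rw [div_eq_div_iff (by positivity) (by positivity)]
  ring

lemma relCommDeg_lt [Fintype G] {K H : Subgroup G} (hKH : K ≤ H) (g₀ : G)
    (hss : orbit (conjSub K) g₀ ⊂ orbit (conjSub H) g₀) :
    relCommDeg H < relCommDeg K := by
  rw [relCommDeg_eq, relCommDeg_eq]
  have hGpos : 0 < (Nat.card G : ℚ) := by
    have : 0 < Nat.card G := Nat.card_pos
    exact_mod_cast this
  have hle : ∀ g : G, Nat.card (orbit (conjSub K) g) ≤ Nat.card (orbit (conjSub H) g) := by
    intro g
    rw [Nat.card_coe_set_eq, Nat.card_coe_set_eq]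
    exact Set.ncard_le_ncard (orbit_conjSub_mono hKH g) (Set.toFinite _)
  have key : (∑ g : G, ((Nat.card (orbit (conjSub H) g) : ℚ))⁻¹)
      < ∑ g : G, ((Nat.card (orbit (conjSub K) g) : ℚ))⁻¹ := by
    apply Finset.sum_lt_sum
    · intro g _
      have h1 : 0 < (Nat.card (orbit (conjSub K) g) : ℚ) := by
        exact_mod_cast orbit_card_pos K g
      have h2 : (Nat.card (orbit (conjSub K) g) : ℚ)
          ≤ (Nat.card (orbit (conjSub H) g) : ℚ) := by exact_mod_cast hle g
      gcongr
    · refine ⟨g₀, Finset.mem_univ _, ?_⟩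
      have h1 : 0 < (Nat.card (orbit (conjSub K) g₀) : ℚ) := by
        exact_mod_cast orbit_card_pos K g₀
      have h2 : (Nat.card (orbit (conjSub K) g₀) : ℚ)
          < (Nat.card (orbit (conjSub H) g₀) : ℚ) := by
        have : Nat.card (orbit (conjSub K) g₀) < Nat.card (orbit (conjSub H) g₀) := by
          rw [Nat.card_coe_set_eq, Nat.card_coe_set_eq]
          exact Set.ncard_strictMono hss
        exact_mod_cast this
      gcongr
  exact div_lt_div_of_pos_right key hGpos

end Aux

theorem relCommDeg_sandwich (G : Type*) [Group G] [Finite G] (x : G)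
    (hC : ¬ ∀ a b : (Subgroup.centralizer {x} : Subgroup G), a * b = b * a)
    (H : Subgroup G) (hH : ∀ a b : H, a * b = b * a)
    (h1 : Subgroup.zpowers x < H) (h2 : H < Subgroup.centralizer {x})
    (h3 : ¬ H ≤ Subgroup.centralizer ((Subgroup.centralizer {x} : Subgroup G) : Set G)) :
    relCommDeg (Subgroup.centralizer {x} : Subgroup G) < relCommDeg H ∧
      relCommDeg H < relCommDeg (Subgroup.zpowers x) := by
  cases nonempty_fintype G
  set C : Subgroup G := Subgroup.centralizer {x} with hCdef
  -- extract a noncommuting pair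
  obtain ⟨h₀, hh₀H, hh₀⟩ := SetLike.not_le_iff_exists.mp h3
  rw [Subgroup.mem_centralizer_iff] at hh₀
  push_neg at hh₀
  obtain ⟨c, hcC, hc⟩ := hh₀
  have hh₀C : h₀ ∈ C := h2.le hh₀H
  -- H-orbits of elements of H are singletons
  have horbH : ∀ y, y ∈ orbit (conjSub H) h₀ → y = h₀ := by
    intro y hy
    rw [mem_orbit_conjSub_iff] at hy
    obtain ⟨h, hh, rfl⟩ := hy
    have := hH ⟨h, hh⟩ ⟨h₀, hh₀H⟩
    have hcomm : h * h₀ = h₀ * h := congrArg Subtype.val this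
    rw [hcomm]; group
  -- ⟨x⟩-orbits of elements of C are singletons
  have hxc : Commute x c := by
    have := Subgroup.mem_centralizer_iff.mp hcC x rfl
    exact this
  have horbx : ∀ y, y ∈ orbit (conjSub (Subgroup.zpowers x)) c → y = c := by
    intro y hy
    rw [mem_orbit_conjSub_iff] at hy
    obtain ⟨h, hh, rfl⟩ := hy
    obtain ⟨n, rfl⟩ := Subgroup.mem_zpowers_iff.mp hh
    have : Commute (x ^ n) c := hxc.zpow_left n
    rw [this.eq]; group
  constructor
  · -- d(C) < d(H) via orbit of h₀
    refine relCommDeg_lt h2.le h₀ ⟨orbit_conjSub_mono h2.le h₀, fun hsub => ?_⟩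
    have hmem : c * h₀ * c⁻¹ ∈ orbit (conjSub C) h₀ := mem_orbit_conjSub hcC
    have := horbH _ (hsub hmem)
    apply hc
    have := congrArg (· * c) this
    simpa [mul_assoc] using this
  · -- d(H) < d(⟨x⟩) via orbit of c
    refine relCommDeg_lt h1.le c ⟨orbit_conjSub_mono h1.le c, fun hsub => ?_⟩
    have hmem : h₀ * c * h₀⁻¹ ∈ orbit (conjSub H) c := mem_orbit_conjSub hh₀H
    have h5 := horbx _ (hsub hmem)
    have h6 : h₀ * c = c * h₀ := by
      have := congrArg (· * h₀) h5
      simpa [mul_assoc] using this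
    exact hc h6.symm
end

section
/- There is no finite group G whose set of relative commutativity degrees D(G) = {d(H,G) : H ≤ G} has exactly two elements. -/
/-!
If `G` is abelian then `D(G) = {1}`. Otherwise `d(H,G) = 1` exactly when `H` is central, and
counting commuting pairs column by column gives `d(H,G) = |G|⁻¹ ∑_g |H ∩ C_G(g)| / |H|`, where
`|H ∩ C_G(g)| / |H| ≥ |C_G(g)| / |G|` since `|H||K| ≤ |H ∩ K||G|`. Hence `d(G,G) ≤ d(H,G)`, with
strict inequality when `H ≤ C_G(x)` for a non-central `x`. For `H = ⟨x⟩` this yields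
`d(G,G) < d(⟨x⟩,G) < 1 = d(1,G)`.
-/

open Subgroup

section

variable {G : Type*} [Group G]

theorem card_mul_card_le_card_inf_mul_card [Finite G] (H K : Subgroup G) :
    Nat.card H * Nat.card K ≤ Nat.card ↥(H ⊓ K) * Nat.card G := by
  have hindex : 0 < H.index * K.index :=
    Nat.pos_of_ne_zero (mul_ne_zero index_ne_zero_of_finite index_ne_zero_of_finite)
  refine Nat.le_of_mul_le_mul_right ?_ hindex
  calc Nat.card H * Nat.card K * (H.index * K.index)
      = Nat.card ↥(H ⊓ K) * (H ⊓ K).index * Nat.card G := by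
        rw [card_mul_index, mul_mul_mul_comm, card_mul_index, card_mul_index]
    _ ≤ Nat.card ↥(H ⊓ K) * (H.index * K.index) * Nat.card G := by
        gcongr
        exact index_inf_le
    _ = Nat.card ↥(H ⊓ K) * Nat.card G * (H.index * K.index) := by ring

theorem card_div_card_le_card_inf_div_card [Finite G] (H K : Subgroup G) :
    (Nat.card K : ℚ) / Nat.card G ≤ Nat.card ↥(H ⊓ K) / Nat.card H := by
  rw [div_le_div_iff₀ (mod_cast Nat.card_pos) (mod_cast Nat.card_pos)]
  exact_mod_cast (mul_comm _ _).trans_le (card_mul_card_le_card_inf_mul_card H K)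

theorem card_commuting_pairs_eq_sum [Fintype G] (H : Subgroup G) :
    Nat.card {p : H × G // (p.1 : G) * p.2 = p.2 * p.1} =
      ∑ g : G, Nat.card ↥(H ⊓ centralizer {g}) := by
  rw [← Nat.card_sigma]
  exact Nat.card_congr
    { toFun := fun p => ⟨p.1.2, p.1.1, p.1.1.2, mem_centralizer_singleton_iff.2 p.2⟩
      invFun := fun q => ⟨(⟨q.2, q.2.2.1⟩, q.1), mem_centralizer_singleton_iff.1 q.2.2.2⟩
      left_inv := fun _ => rfl
      right_inv := fun _ => rfl }

theorem relCommDeg_eq_sum [Fintype G] (H : Subgroup G) :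
    relCommDeg H = (∑ g : G, (Nat.card ↥(H ⊓ centralizer {g}) : ℚ) / Nat.card H) / Nat.card G := by
  rw [relCommDeg, card_commuting_pairs_eq_sum, ← Finset.sum_div, div_div, mul_comm]
  push_cast
  rfl

theorem relCommDeg_eq_card_div_card [Finite G] (H : Subgroup G) :
    relCommDeg H =
      Nat.card {p : H × G // (p.1 : G) * p.2 = p.2 * p.1} / (Nat.card (H × G) : ℚ) := by
  rw [relCommDeg, Nat.card_prod, Nat.cast_mul]

theorem relCommDeg_eq_one [Finite G] {H : Subgroup G} (hH : H ≤ center G) :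
    relCommDeg H = 1 := by
  have hcomm (p : H × G) : (p.1 : G) * p.2 = p.2 * p.1 := (mem_center_iff.1 (hH p.1.2) p.2).symm
  rw [relCommDeg_eq_card_div_card, Nat.card_congr (Equiv.subtypeUnivEquiv hcomm),
    div_self (mod_cast Nat.card_pos.ne')]

theorem relCommDeg_lt_one [Finite G] {H : Subgroup G} (hH : ¬H ≤ center G) :
    relCommDeg H < 1 := by
  obtain ⟨h, hH, hZ⟩ := SetLike.not_le_iff_exists.1 hH
  obtain ⟨g, hg⟩ := not_forall.1 (mt mem_center_iff.2 hZ)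
  rw [relCommDeg_eq_card_div_card, div_lt_one (mod_cast Nat.card_pos)]
  exact_mod_cast Finite.card_subtype_lt (p := fun p : H × G => (p.1 : G) * p.2 = p.2 * p.1)
    (x := (⟨h, hH⟩, g)) (Ne.symm hg)

theorem relCommDeg_top_lt [Finite G] {H : Subgroup G} {x : G} (hx : x ∉ center G)
    (hH : H ≤ centralizer {x}) : relCommDeg (⊤ : Subgroup G) < relCommDeg H := by
  have := Fintype.ofFinite G
  rw [relCommDeg_eq_sum, relCommDeg_eq_sum]
  refine div_lt_div_of_pos_right (Finset.sum_lt_sum (fun g _ => ?_) ⟨x, Finset.mem_univ x, ?_⟩)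
    (mod_cast Nat.card_pos)
  · rw [top_inf_eq, card_top]
    exact card_div_card_le_card_inf_div_card H _
  · have hC : centralizer {x} ≠ ⊤ := fun h =>
      hx (Set.singleton_subset_iff.1 (centralizer_eq_top_iff_subset.1 h))
    rw [top_inf_eq, card_top, inf_eq_left.2 hH, div_self (mod_cast Nat.card_pos.ne'),
      div_lt_one (mod_cast Nat.card_pos)]
    exact_mod_cast (card_le_card_group _).lt_of_ne ((card_eq_iff_eq_top _).not.2 hC)

theorem commDegSet_eq_singleton_one [Finite G] (hG : center G = ⊤) : commDegSet G = {1} := by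
  refine Set.eq_singleton_iff_unique_mem.2 ⟨⟨⊥, relCommDeg_eq_one bot_le⟩, ?_⟩
  rintro _ ⟨H, rfl⟩
  exact relCommDeg_eq_one (hG ▸ le_top)

theorem three_le_ncard_commDegSet [Finite G] (hG : center G ≠ ⊤) : 3 ≤ (commDegSet G).ncard := by
  obtain ⟨x, -, hx⟩ := SetLike.exists_of_lt (Ne.lt_top hG)
  have hxK : ¬zpowers x ≤ center G := fun h => hx (h (mem_zpowers x))
  have hlt₁ := relCommDeg_top_lt hx (zpowers_le.2 (mem_centralizer_singleton_iff.2 rfl))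
  have hlt₂ := relCommDeg_lt_one hxK
  calc 3 = ({relCommDeg (⊤ : Subgroup G), relCommDeg (zpowers x), 1} : Set ℚ).ncard :=
        (Set.ncard_eq_three.2 ⟨_, _, _, hlt₁.ne, (hlt₁.trans hlt₂).ne, hlt₂.ne, rfl⟩).symm
    _ ≤ (commDegSet G).ncard := by
        refine Set.ncard_le_ncard ?_ (Set.finite_range relCommDeg)
        rintro _ (rfl | rfl | rfl)
        exacts [⟨⊤, rfl⟩, ⟨zpowers x, rfl⟩, ⟨⊥, relCommDeg_eq_one bot_le⟩]

end

theorem commDegSet_ncard_ne_two (G : Type*) [Group G] [Finite G] :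
    (commDegSet G).ncard ≠ 2 := by
  by_cases hG : center G = ⊤
  · rw [commDegSet_eq_singleton_one hG, Set.ncard_singleton]
    decide
  · have := three_le_ncard_commDegSet hG
    omega
end

section
/- Let G be a finite p-group whose non-central elements all have conjugacy classes of size p^m, and let H be a subgroup containing Z(G) with [H : Z(G)] = pⁱ. Then d(H,G) = (p^m + pⁱ − 1)/p^{m+i}. -/
open Subgroup Finset

section

variable {G : Type*} [Group G]

theorem card_isConj_mul_card_centralizer (g : G) :
    Nat.card {x : G // IsConj g x} * Nat.card (centralizer {g}) = Nat.card G := by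
  have horbit : Nat.card {x : G // IsConj g x} = (MulAction.stabilizer (ConjAct G) g).index := by
    rw [MulAction.index_stabilizer, ← Nat.card_coe_set_eq]
    exact Nat.card_congr <| Equiv.subtypeEquivRight fun x => by
      rw [ConjAct.mem_orbit_conjAct, isConj_comm]
  rw [horbit, nat_card_centralizer_nat_card_stabilizer, index_mul_card]
  exact Nat.card_congr ConjAct.ofConjAct.toEquiv

theorem card_mul_relIndex {K H : Subgroup G} (hKH : K ≤ H) :
    Nat.card K * K.relIndex H = Nat.card H := by
  rw [← relIndex_bot_left, ← relIndex_bot_left, relIndex_mul_relIndex _ _ _ bot_le hKH]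

theorem card_commutingPairs_eq_sum_card_centralizer (H : Subgroup G) [Fintype H] [Finite G] :
    Nat.card {q : H × G // (q.1 : G) * q.2 = q.2 * q.1} =
      ∑ h : H, Nat.card (centralizer {(h : G)}) := by
  rw [Nat.card_congr (Equiv.subtypeProdEquivSigmaSubtype fun (h : H) (g : G) => (h : G) * g = g * h),
    Nat.card_sigma]
  exact Fintype.sum_congr _ _ fun h => Nat.card_congr <|
    Equiv.subtypeEquivRight fun g => by rw [mem_centralizer_singleton_iff, eq_comm]

theorem card_filter_mem_center {H : Subgroup G} [Fintype H] (hZH : center G ≤ H)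
    [DecidablePred (· ∈ center G)] :
    #{h : H | (h : G) ∈ center G} = Nat.card (center G) := by
  rw [← Fintype.card_subtype, ← Nat.card_eq_fintype_card]
  exact Nat.card_congr <| (Equiv.subtypeEquivRight fun h => mem_subgroupOf).symm.trans
    (subgroupOfEquivOfLe hZH).toEquiv

theorem sum_card_centralizer_of_card_isConj [Finite G] {n : ℕ}
    (hcl : ∀ g : G, g ∉ center G → Nat.card {x : G // IsConj g x} = n)
    {H : Subgroup G} [Fintype H] (hZH : center G ≤ H) :
    ∑ h : H, (Nat.card (centralizer {(h : G)}) : ℚ) =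
      Nat.card G / n * Nat.card H + (Nat.card G - Nat.card G / n) * Nat.card (center G) := by
  classical
  have hcentralizer (h : H) : (Nat.card (centralizer {(h : G)}) : ℚ) =
      Nat.card G / n + if (h : G) ∈ center G then (Nat.card G - Nat.card G / n : ℚ) else 0 := by
    split_ifs with hh
    · rw [add_sub_cancel, (centralizer_eq_top_iff_subset.mpr (by simpa using hh)), card_top]
    · have hmul := card_isConj_mul_card_centralizer (h : G)
      rw [hcl _ hh] at hmul
      have hn : (n : ℚ) ≠ 0 := by
        rintro hn0
        simp [Nat.cast_eq_zero.mp hn0, eq_comm, Nat.card_pos.ne'] at hmul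
      rw [add_zero, ← hmul, Nat.cast_mul, mul_div_cancel_left₀ _ hn]
  simp only [hcentralizer, sum_add_distrib, sum_const, sum_ite, card_filter_mem_center hZH, card_univ,
    ← Nat.card_eq_fintype_card, nsmul_eq_mul]
  ring

end

theorem relCommDeg_of_two_class_sizes_general (G : Type*) [Group G] [Finite G]
    (p m i : ℕ) (hp : p.Prime)
    (hcl : ∀ g : G, g ∉ Subgroup.center G →
      Nat.card {x : G // IsConj g x} = p ^ m)
    (H : Subgroup G) (hZH : Subgroup.center G ≤ H)
    (hi : (Subgroup.center G).relIndex H = p ^ i) :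
    relCommDeg H = ((p : ℚ) ^ m + (p : ℚ) ^ i - 1) / (p : ℚ) ^ (m + i) := by
  have := Fintype.ofFinite H
  have hpairs := congrArg (Nat.cast : ℕ → ℚ) (card_commutingPairs_eq_sum_card_centralizer H)
  push_cast at hpairs
  have hH : (Nat.card H : ℚ) = p ^ i * Nat.card (center G) := by
    rw [← card_mul_relIndex hZH, hi]; push_cast; ring
  have hp0 : (p : ℚ) ≠ 0 := by exact_mod_cast hp.ne_zero
  have hZ0 : (Nat.card (center G) : ℚ) ≠ 0 := by simp [Nat.card_pos.ne']
  have hG0 : (Nat.card G : ℚ) ≠ 0 := by simp [Nat.card_pos.ne']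
  rw [relCommDeg, hpairs, sum_card_centralizer_of_card_isConj hcl hZH, hH]
  push_cast
  field_simp
  ring

theorem relCommDeg_of_two_class_sizes (G : Type*) [Group G] [Finite G]
    (p m i : ℕ) (hp : p.Prime) (hpG : IsPGroup p G)
    (hcl : ∀ g : G, g ∉ Subgroup.center G →
      Nat.card {x : G // IsConj g x} = p ^ m)
    (H : Subgroup G) (hZH : Subgroup.center G ≤ H)
    (hi : (Subgroup.center G).relIndex H = p ^ i) :
    relCommDeg H = ((p : ℚ) ^ m + (p : ℚ) ^ i - 1) / (p : ℚ) ^ (m + i) :=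
  relCommDeg_of_two_class_sizes_general G p m i hp hcl H hZH hi
end
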